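/- Let μ ≥ 2, n ≥ 1, (s_0,...,s_{n-1}) ∈ N^n, and let s_n be a positive integer such that there is no pair (k, z) with k a positive integer, z ∈ Z^n nonzero, s_n·k = |∑_{i<n} s_i z_i| and ⟨z,z⟩ + k² < μ. Assume also that every nonzero z ∈ Z^n with ∑_{i<n} s_i z_i = 0 has ⟨z,z⟩ ≥ μ. Then every nonzero w ∈ Z^{n+1} with ∑_{i≤n} s_i w_i = 0 satisfies ⟨w,w⟩ ≥ μ. -/
import Mathlib


theorem stmt17 (n μ : ℕ) (hn : 1 ≤ n) (hμ : 2 ≤ μ)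
    (s : Fin n → ℕ) (hs : ∀ i, 0 < s i) (sn : ℕ) (hsn : 0 < sn)
    (hnopair : ¬ ∃ (k : ℕ) (z : Fin n → ℤ), 0 < k ∧ z ≠ 0 ∧
      ((sn : ℤ) * k = |∑ i, (s i : ℤ) * z i|) ∧ (∑ i, z i ^ 2) + (k : ℤ) ^ 2 < μ)
    (hmin : ∀ z : Fin n → ℤ, z ≠ 0 → (∑ i, (s i : ℤ) * z i) = 0 →
      (μ : ℤ) ≤ ∑ i, z i ^ 2) :
    ∀ w : Fin (n + 1) → ℤ, w ≠ 0 →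
      (∑ i, ((Fin.snoc s sn : Fin (n + 1) → ℕ) i : ℤ) * w i) = 0 →
      (μ : ℤ) ≤ ∑ i, w i ^ 2 := by
  intro w hw hsum
  set z : Fin n → ℤ := fun i => w i.castSucc with hz
  have hsum' : (∑ i, (s i : ℤ) * z i) + (sn : ℤ) * w (Fin.last n) = 0 := by
    rw [Fin.sum_univ_castSucc] at hsum
    simpa using hsum
  have hwsq : (∑ i, w i ^ 2) = (∑ i, z i ^ 2) + w (Fin.last n) ^ 2 := by
    rw [Fin.sum_univ_castSucc]
  by_cases hlast : w (Fin.last n) = 0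
  · have hz0 : z ≠ 0 := by
      intro h
      apply hw
      funext i
      rcases Fin.eq_castSucc_or_eq_last i with ⟨j, rfl⟩ | rfl
      · exact congrFun h j
      · exact hlast
    have := hmin z hz0 (by simpa [hlast] using hsum')
    rw [hwsq, hlast]
    simpa using this
  · have hz0 : z ≠ 0 := by
      intro h
      have : (sn : ℤ) * w (Fin.last n) = 0 := by
        simpa [h] using hsum'
      rcases mul_eq_zero.1 this with h1 | h1
      · exact absurd h1 (by positivity)
      · exact hlast h1
    by_contra hlt
    push_neg at hlt
    apply hnopair
    refine ⟨(w (Fin.last n)).natAbs, z, Int.natAbs_pos.2 hlast, hz0, ?_, ?_⟩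
    · have : (∑ i, (s i : ℤ) * z i) = -((sn : ℤ) * w (Fin.last n)) := by linarith
      rw [this, abs_neg, abs_mul, Int.abs_natCast, Int.abs_eq_natAbs]
    · calc (∑ i, z i ^ 2) + ((w (Fin.last n)).natAbs : ℤ) ^ 2
          = ∑ i, w i ^ 2 := by rw [hwsq]; push_cast [sq_abs]; ring
        _ < μ := hlt
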